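/- Let E = V ⊕ V* with the standard pairing and J a linear generalized complex structure such that, writing J in block form J(X,ξ) = (AX + Πξ, ωX − A*ξ), the condition J² = −Id holds. Let C ⊆ V be a subspace, B an alternating bilinear form on V (viewed as B : V → V*), and suppose the transformed endomorphism à = A + Π∘B of V preserves C and ♯(C°) ⊆ C where ♯ξ = Πξ. Then the maximal isotropic L = τ_C^{i*B} satisfies J(C°) ∩ π^{-1}(C) ⊆ L, i.e., for every ξ ∈ C° with π(Jξ) ∈ C one has J(0,ξ) ∈ τ_C^{i*B}. -/

import Mathlib

open Module Submodule

noncomputable section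

variable (V : Type*) [AddCommGroup V] [Module ℝ V]

abbrev EE := V × Module.Dual ℝ V

def pairE : LinearMap.BilinForm ℝ (EE V) :=
  LinearMap.mk₂ ℝ (fun u v => (u.2 v.1 + v.2 u.1) / 2)
    (by intro a b c; simp; ring)
    (by intro r a b; simp [smul_eq_mul]; ring)
    (by intro a b c; simp; ring)
    (by intro r a b; simp [smul_eq_mul]; ring)

def orthE (D : Submodule ℝ (EE V)) : Submodule ℝ (EE V) where
  carrier := {e | ∀ d ∈ D, pairE V e d = 0}
  add_mem' := by
    intro a b ha hb d hd
    simp only [map_add, LinearMap.add_apply, ha d hd, hb d hd, add_zero]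
  zero_mem' := by intro d hd; simp
  smul_mem' := by
    intro r a ha d hd
    simp only [map_smul, LinearMap.smul_apply, ha d hd, smul_zero]

def piE : EE V →ₗ[ℝ] V := LinearMap.fst ℝ V (Module.Dual ℝ V)

instance instQuotE (P : Submodule ℝ (EE V)) : HasQuotient ↥P (Submodule ℝ ↥P) :=
  @Submodule.hasQuotient ℝ ↥P _ _ _

theorem stmt_15 [FiniteDimensional ℝ V]
    (A : V →ₗ[ℝ] V) (Pi : Module.Dual ℝ V →ₗ[ℝ] V) (om : V →ₗ[ℝ] Module.Dual ℝ V)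
    (hPi : ∀ ξ η : Module.Dual ℝ V, η (Pi ξ) = - ξ (Pi η))
    (hom : ∀ x y : V, om x y = - om y x)
    (J : EE V →ₗ[ℝ] EE V)
    (hJdef : ∀ (X : V) (ξ : Module.Dual ℝ V), J (X, ξ) = (A X + Pi ξ, om X - A.dualMap ξ))
    (hJ2 : ∀ e, J (J e) = -e)
    (hJp : ∀ u v, pairE V (J u) (J v) = pairE V u v)
    (C : Submodule ℝ V) (B : LinearMap.BilinForm ℝ V) (hB : ∀ x, B x x = 0)
    (hA : ∀ x ∈ C, A x + Pi (B x) ∈ C)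
    (hsharp : ∀ ξ ∈ C.dualAnnihilator, Pi ξ ∈ C) :
    ∀ ξ ∈ C.dualAnnihilator, (J ((0 : V), ξ)).1 ∈ C →
      ∀ c ∈ C, (J ((0 : V), ξ)).2 c = B (J ((0 : V), ξ)).1 c := by
  intro ξ hξ _ c hc
  rw [hJdef]
  simp only [map_zero, zero_add, zero_sub, LinearMap.neg_apply, LinearMap.dualMap_apply]
  have h1 : ξ (A c + Pi (B c)) = 0 :=
    (Submodule.mem_dualAnnihilator ξ).mp hξ _ (hA c hc)
  have h2 : B (Pi ξ) c = - B c (Pi ξ) := by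
    have := hB (Pi ξ + c)
    simp only [map_add, LinearMap.add_apply, hB] at this
    linarith
  have h3 := hPi ξ (B c)
  simp only [map_add] at h1
  linarith
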